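/- arXiv:2010.15473 — 3 statements merged into one kernel-verified Lean document; each statement's English description precedes it below -/
import Mathlib

section
/- Assume θ, a, E satisfy the trisecant Fay identity with E antisymmetric and E(x,y) ≠ 0 for x ≠ y. Then for any four pairwise distinct points a, b, c, d and all z: [E(a,d)/(E(a,b)E(a,c))]·θ(z+a(b)+a(c))·θ(z+a(d)+a(a)) + [E(b,d)/(E(b,a)E(b,c))]·θ(z+a(a)+a(c))·θ(z+a(d)+a(b)) + [E(c,d)/(E(c,a)E(c,b))]·θ(z+a(a)+a(b))·θ(z+a(d)+a(c)) = 0. -/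
theorem fay_three_term {g : ℕ} {P : Type*}
    (θ : (Fin g → ℂ) → ℂ) (a : P → (Fin g → ℂ)) (E : P → P → ℂ)
    (hanti : ∀ x y, E x y = -E y x)
    (hnz : ∀ x y, x ≠ y → E x y ≠ 0)
    (hfay : ∀ (z : Fin g → ℂ) (p q r s : P),
      E p q * E r s * θ z * θ (z + a p + a q - a r - a s) =
        E p r * E q s * θ (z + a p - a s) * θ (z + a q - a r) -
        E p s * E q r * θ (z + a p - a r) * θ (z + a q - a s)) :
    ∀ (z : Fin g → ℂ) (p q r s : P),
      p ≠ q → p ≠ r → p ≠ s → q ≠ r → q ≠ s → r ≠ s →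
      (E p s / (E p q * E p r)) * θ (z + a q + a r) * θ (z + a s + a p) +
        (E q s / (E q p * E q r)) * θ (z + a p + a r) * θ (z + a s + a q) +
        (E r s / (E r p * E r q)) * θ (z + a p + a q) * θ (z + a s + a r)
      = 0 := by
  intro z p q r s hpq hpr hps hqr hqs hrs
  have h := hfay (z + a r + a s) p q r s
  have e1 : z + a r + a s + a p + a q - a r - a s = z + a p + a q := by abel
  have e2 : z + a r + a s + a p - a s = z + a p + a r := by abel
  have e3 : z + a r + a s + a q - a r = z + a s + a q := by abel
  have e4 : z + a r + a s + a p - a r = z + a s + a p := by abel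
  have e5 : z + a r + a s + a q - a s = z + a q + a r := by abel
  have e6 : z + a r + a s = z + a s + a r := by abel
  rw [e1, e2, e3, e4, e5, e6] at h
  have hqp : E q p = -E p q := by rw [hanti q p]
  have hrp : E r p = -E p r := by rw [hanti r p]
  have hrq : E r q = -E q r := by rw [hanti r q]
  rw [hqp, hrp, hrq]
  have h1 := hnz p q hpq
  have h2 := hnz p r hpr
  have h3 := hnz q r hqr
  field_simp
  linear_combination h
end

section
/- (Quasiperiodic solutions of the n-dimensional Hirota bilinear discrete equation.) Let θ : ℂ^g → ℂ, z₀ ∈ ℂ^g, and for k = 1,…,n let e_k ∈ ℂ^g and γ_k ∈ ℂ. Assume that for every z ∈ ℂ^g, Σ_{k=1}^n exp(γ_k) · θ(z + e_k) · θ(z − e_k) = 0. Define τ : ℤ^n → ℂ by τ(m) = exp((1/2) Σ_{k=1}^n m_k² γ_k) · θ(z₀ + Σ_{k=1}^n m_k e_k). Then for every m ∈ ℤ^n, Σ_{k=1}^n τ(m + δ_k) · τ(m − δ_k) = 0, where δ_k is the k-th standard unit vector of ℤ^n. -/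
theorem hirota_quasiperiodic {g n : ℕ}
    (θ : (Fin g → ℂ) → ℂ) (z₀ : Fin g → ℂ)
    (e : Fin n → (Fin g → ℂ)) (γ : Fin n → ℂ)
    (h : ∀ z : Fin g → ℂ,
      ∑ k, Complex.exp (γ k) * θ (z + e k) * θ (z - e k) = 0)
    (τ : (Fin n → ℤ) → ℂ)
    (hτ : ∀ m : Fin n → ℤ,
      τ m = Complex.exp ((1 / 2) * ∑ k, ((m k : ℂ)) ^ 2 * γ k) *
        θ (z₀ + ∑ k, ((m k : ℂ)) • e k)) :
    ∀ m : Fin n → ℤ,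
      ∑ k, τ (m + Pi.single k 1) * τ (m - Pi.single k 1) = 0 := by
  intro m
  set S : ℂ := ∑ j, ((m j : ℂ)) ^ 2 * γ j with hS
  set Z : Fin g → ℂ := z₀ + ∑ j, ((m j : ℂ)) • e j with hZ
  have key : ∀ k, τ (m + Pi.single k 1) * τ (m - Pi.single k 1)
      = Complex.exp S * (Complex.exp (γ k) * θ (Z + e k) * θ (Z - e k)) := by
    intro k
    have hsum : (∑ j, ((((m + Pi.single k 1 : Fin n → ℤ)) j : ℂ)) ^ 2 * γ j)
        + (∑ j, ((((m - Pi.single k 1 : Fin n → ℤ)) j : ℂ)) ^ 2 * γ j) = 2 * S + 2 * γ k := by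
      rw [← Finset.sum_add_distrib]
      have hterm : ∀ j : Fin n, ((((m + Pi.single k 1 : Fin n → ℤ)) j : ℂ)) ^ 2 * γ j
          + ((((m - Pi.single k 1 : Fin n → ℤ)) j : ℂ)) ^ 2 * γ j
          = 2 * (((m j : ℂ)) ^ 2 * γ j) + (if j = k then 2 * γ j else 0) := by
        intro j
        simp only [Pi.add_apply, Pi.sub_apply, Pi.single_apply]
        split_ifs <;> push_cast <;> ring
      rw [Finset.sum_congr rfl (fun j _ => hterm j), Finset.sum_add_distrib,
        ← Finset.mul_sum]
      simp [hS]
    have hzp : (z₀ + ∑ j, ((((m + Pi.single k 1 : Fin n → ℤ)) j : ℂ)) • e j) = Z + e k := by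
      have : ∀ j : Fin n, ((((m + Pi.single k 1 : Fin n → ℤ)) j : ℂ)) • e j
          = (m j : ℂ) • e j + (if j = k then e j else 0) := by
        intro j
        simp only [Pi.add_apply, Pi.single_apply]
        split_ifs <;> push_cast <;> simp [add_smul]
      rw [Finset.sum_congr rfl (fun j _ => this j), Finset.sum_add_distrib]
      simp [hZ, add_assoc]
    have hzm : (z₀ + ∑ j, ((((m - Pi.single k 1 : Fin n → ℤ)) j : ℂ)) • e j) = Z - e k := by
      have : ∀ j : Fin n, ((((m - Pi.single k 1 : Fin n → ℤ)) j : ℂ)) • e j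
          = (m j : ℂ) • e j - (if j = k then e j else 0) := by
        intro j
        simp only [Pi.sub_apply, Pi.single_apply]
        split_ifs <;> push_cast <;> simp [sub_smul]
      rw [Finset.sum_congr rfl (fun j _ => this j), Finset.sum_sub_distrib]
      simp [hZ]
      abel
    rw [hτ, hτ, hzp, hzm]
    rw [show Complex.exp ((1/2) * ∑ j, ((((m + Pi.single k 1 : Fin n → ℤ)) j : ℂ)) ^ 2 * γ j) *
        θ (Z + e k) * (Complex.exp ((1/2) * ∑ j, ((((m - Pi.single k 1 : Fin n → ℤ)) j : ℂ)) ^ 2 * γ j) *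
        θ (Z - e k)) = Complex.exp ((1/2) * ((∑ j, ((((m + Pi.single k 1 : Fin n → ℤ)) j : ℂ)) ^ 2 * γ j)
        + (∑ j, ((((m - Pi.single k 1 : Fin n → ℤ)) j : ℂ)) ^ 2 * γ j))) * θ (Z + e k) * θ (Z - e k) by
      rw [mul_add, Complex.exp_add]; ring]
    rw [hsum]
    rw [show (1/2 : ℂ) * (2 * S + 2 * γ k) = S + γ k by ring, Complex.exp_add]
    ring
  rw [Finset.sum_congr rfl (fun k _ => key k), ← Finset.mul_sum, h Z, mul_zero]
end

section
/- (Quasiperiodic solutions of an n-dimensional Toda-type bilinear equation.) Let θ : ℂ^g → ℂ, z₀ ∈ ℂ^g, and for k = 1,…,n let e_k ∈ ℂ^g and γ_k ∈ ℂ. Assume that for every z ∈ ℂ^g, θ(z)² = Σ_{k=1}^n exp(γ_k) · θ(z + e_k) · θ(z − e_k). Define T : ℤ^n → ℂ by T(m) = exp((1/2) Σ_{k=1}^n m_k² γ_k) · θ(z₀ + Σ_{k=1}^n m_k e_k). Then for every m ∈ ℤ^n, Σ_{k=1}^n T(m + δ_k) · T(m − δ_k) = T(m)². -/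
theorem toda_quasiperiodic {g n : ℕ}
    (θ : (Fin g → ℂ) → ℂ) (z₀ : Fin g → ℂ)
    (e : Fin n → (Fin g → ℂ)) (γ : Fin n → ℂ)
    (h : ∀ z : Fin g → ℂ,
      θ z ^ 2 = ∑ k, Complex.exp (γ k) * θ (z + e k) * θ (z - e k))
    (T : (Fin n → ℤ) → ℂ)
    (hT : ∀ m : Fin n → ℤ,
      T m = Complex.exp ((1 / 2) * ∑ k, ((m k : ℂ)) ^ 2 * γ k) *
        θ (z₀ + ∑ k, ((m k : ℂ)) • e k)) :
    ∀ m : Fin n → ℤ,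
      ∑ k, T (m + Pi.single k 1) * T (m - Pi.single k 1) = T m ^ 2 := by
  intro m
  set S : ℂ := ∑ j, ((m j : ℂ))^2 * γ j with hS
  set Z : Fin g → ℂ := z₀ + ∑ j, ((m j : ℂ)) • e j with hZ
  have aux : ∀ (k : Fin n) (ε : ℤ),
      T (m + Pi.single k ε) =
        Complex.exp ((1/2) * S + (1/2) * ((ε:ℂ)^2 + 2*ε*(m k)) * γ k) *
          θ (Z + (ε:ℂ) • e k) := by
    intro k ε
    rw [hT]
    have h1 : ∀ j ∈ Finset.univ, ((m + Pi.single k ε : Fin n → ℤ) j : ℂ)^2 * γ j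
        = (m j:ℂ)^2 * γ j + (if j = k then ((ε:ℂ)^2 + 2*ε*(m k)) * γ k else 0) := by
      intro j _
      by_cases hj : j = k
      · subst hj
        simp only [Pi.add_apply, Pi.single_eq_same, if_pos rfl]
        push_cast
        ring
      · simp [Pi.add_apply, Pi.single_eq_of_ne hj, hj]
    have h2 : ∀ j ∈ Finset.univ, ((m + Pi.single k ε : Fin n → ℤ) j : ℂ) • e j
        = (m j:ℂ) • e j + (if j = k then (ε:ℂ) • e k else 0) := by
      intro j _
      by_cases hj : j = k
      · subst hj
        simp only [Pi.add_apply, Pi.single_eq_same, if_pos rfl]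
        push_cast
        rw [add_smul]
      · simp [Pi.add_apply, Pi.single_eq_of_ne hj, hj]
    rw [Finset.sum_congr rfl h1, Finset.sum_congr rfl h2,
      Finset.sum_add_distrib, Finset.sum_add_distrib,
      Finset.sum_ite_eq' Finset.univ k, Finset.sum_ite_eq' Finset.univ k]
    simp only [Finset.mem_univ, if_pos]
    congr 1
    · congr 1
      rw [← hS]
      ring
    · rw [hZ]
      abel
  rw [hT m, ← hS, ← hZ, mul_pow, sq (Complex.exp _), ← Complex.exp_add, h Z,
    Finset.mul_sum]
  refine Finset.sum_congr rfl fun k _ => ?_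
  have hsub : m - Pi.single k 1 = m + Pi.single k (-1) := by
    rw [Pi.single_neg, sub_eq_add_neg]
  rw [hsub, aux k 1, aux k (-1), mul_mul_mul_comm, ← Complex.exp_add]
  have hexp : (1/2 * S + 1/2 * (((1:ℤ):ℂ)^2 + 2*((1:ℤ):ℂ)*(m k)) * γ k)
      + (1/2 * S + 1/2 * ((((-1):ℤ):ℂ)^2 + 2*(((-1):ℤ):ℂ)*(m k)) * γ k)
      = (1/2 * S + 1/2 * S) + γ k := by push_cast; ring
  rw [hexp, show (((-1):ℤ):ℂ) • e k = -(e k) by push_cast; rw [neg_smul, one_smul],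
    show (((1):ℤ):ℂ) • e k = e k by push_cast; rw [one_smul],
    ← sub_eq_add_neg, Complex.exp_add]
  ring
end
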